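/- Let Z_r ∈ ℝ^{D×N_r} with K_rr = Z_rᵀ Z_r invertible, Z_u ∈ ℝ^{D×N_u}, B ∈ ℝ^{N_r×N_u}, Z_{r,sub} = Z_r B, y_{r,sub} = Bᵀ y_r, and 0 < c < 1 (any c ≠ 0 suffices). Assume M := (K_uu − K_ur K_rr⁻¹ K_ru)⁻¹ exists. With Z_a = [Z_r Z_u], y_a = [y_r; y_u], Z̃_u = (1−c) Z_{r,sub} + c Z_u, Z̃_a = [Z_r Z̃_u], ỹ_a = [y_r; y_{r,sub}], define w_p = w_init + Z_a (Z_aᵀ Z_a)⁻¹ (y_a − Z_aᵀ w_init), w_u = w_p + Z̃_a (Z̃_aᵀ Z̃_a)⁻¹ (ỹ_a − Z̃_aᵀ w_p), w_r = w_init + Z_r K_rr⁻¹ (y_r − Z_rᵀ w_init), and Π_r = Z_r K_rr⁻¹ Z_rᵀ. Then w_r − w_u = (I_D − Π_r) Z_u M ( K_ur K_rr⁻¹ (y_r − Z_rᵀ w_init) + Z_uᵀ w_init − y_{r,sub} ); in particular the gap w_r − w_u depends only on y_{r,sub} and is independent of the mixing scalar c. -/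

import Mathlib

open Matrix

/-!
Every model in the statement has the form `minNormUpdate Z y w`, the unique interpolant of `y`
in `w + range Z`. The columns of the mixed matrix `[Z_r  Z̃_u]` are an invertible recombination
of those of `[Z_r  Z_u]`, and the relabeling `y_{r,sub} = Bᵀ y_r` is exactly what interpolating
`(y_r, y_{r,sub})` on `[Z_r  Z_u]` induces on `Z̃_u`. Since `w_p ∈ w_init + range Z_a`,
fine-tuning `w_p` on the mixed data therefore gives the model retrained from `w_init` on
`[Z_r  Z_u]` with labels `(y_r, y_{r,sub})`, in which `c` no longer appears. Its gap to `w_r` is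
the Schur-complement correction for appending the columns `Z_u` to `Z_r`.
-/

noncomputable def minNormUpdate {m n R : Type*} [Fintype m] [Fintype n] [DecidableEq n]
    [CommRing R] (Z : Matrix m n R) (y : n → R) (w : m → R) : m → R :=
  w + Z *ᵥ ((Zᵀ * Z)⁻¹ *ᵥ (y - Zᵀ *ᵥ w))

section Update

variable {m n R : Type*} [CommRing R] [Fintype m] [Fintype n] [DecidableEq n]

theorem minNormUpdate_sub_mem_range (Z : Matrix m n R) (y : n → R) (w : m → R) :
    minNormUpdate Z y w - w ∈ LinearMap.range Z.mulVecLin := by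
  rw [minNormUpdate, add_sub_cancel_left]
  exact LinearMap.mem_range_self _ _

theorem transpose_mulVec_minNormUpdate {Z : Matrix m n R} (hZ : IsUnit (Zᵀ * Z))
    (y : n → R) (w : m → R) : Zᵀ *ᵥ minNormUpdate Z y w = y := by
  rw [minNormUpdate, mulVec_add, mulVec_mulVec, mulVec_mulVec,
    mul_nonsing_inv _ ((isUnit_iff_isUnit_det _).mp hZ), one_mulVec, add_sub_cancel]

theorem minNormUpdate_eq_of_sub_mem_range {Z : Matrix m n R} (hZ : IsUnit (Zᵀ * Z))
    {y : n → R} {w v : m → R} (hv : v - w ∈ LinearMap.range Z.mulVecLin)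
    (hy : Zᵀ *ᵥ v = y) : minNormUpdate Z y w = v := by
  obtain ⟨t, ht⟩ := hv
  rw [mulVecLin_apply] at ht
  have hres : y - Zᵀ *ᵥ w = (Zᵀ * Z) *ᵥ t := by
    rw [← hy, ← mulVec_sub, ← ht, mulVec_mulVec]
  rw [minNormUpdate, hres, mulVec_mulVec t, nonsing_inv_mul _ ((isUnit_iff_isUnit_det _).mp hZ),
    one_mulVec, ht, add_sub_cancel]

theorem transpose_mul_one_sub_proj [DecidableEq m] {Z : Matrix m n R} (hZ : IsUnit (Zᵀ * Z)) :
    Zᵀ * (1 - Z * (Zᵀ * Z)⁻¹ * Zᵀ) = 0 := by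
  rw [Matrix.mul_sub, Matrix.mul_one, ← Matrix.mul_assoc, ← Matrix.mul_assoc,
    mul_nonsing_inv _ ((isUnit_iff_isUnit_det _).mp hZ), Matrix.one_mul, sub_self]

theorem isUnit_gram_mul_of_isUnit {A : Matrix m n R} (hA : IsUnit (Aᵀ * A)) {T : Matrix n n R}
    (hT : IsUnit T) : IsUnit ((A * T)ᵀ * (A * T)) := by
  rw [transpose_mul, Matrix.mul_assoc, ← Matrix.mul_assoc Aᵀ]
  exact ((isUnit_transpose T).mpr hT).mul (hA.mul hT)

end Update

section Range

variable {m n k R : Type*} [CommRing R] [Fintype n]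

theorem range_mulVecLin_mul_le [Fintype k] (A : Matrix m n R) (B : Matrix n k R) :
    LinearMap.range (A * B).mulVecLin ≤ LinearMap.range A.mulVecLin := by
  rw [mulVecLin_mul]
  exact LinearMap.range_comp_le_range _ _

theorem range_mulVecLin_mul_of_isUnit [DecidableEq n] (A : Matrix m n R) {T : Matrix n n R}
    (hT : IsUnit T) : LinearMap.range (A * T).mulVecLin = LinearMap.range A.mulVecLin := by
  refine le_antisymm (range_mulVecLin_mul_le A T) ?_
  calc LinearMap.range A.mulVecLin = LinearMap.range (A * T * T⁻¹).mulVecLin := by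
        rw [Matrix.mul_assoc, mul_nonsing_inv _ ((isUnit_iff_isUnit_det _).mp hT), Matrix.mul_one]
    _ ≤ LinearMap.range (A * T).mulVecLin := range_mulVecLin_mul_le _ _

end Range

section Blocks

variable {m n₁ n₂ R : Type*} [CommRing R]

theorem transpose_fromCols_mulVec_eq_sumElim_iff [Fintype m] (X : Matrix m n₁ R)
    (Y : Matrix m n₂ R) (v : m → R) (p : n₁ → R) (q : n₂ → R) :
    (fromCols X Y)ᵀ *ᵥ v = Sum.elim p q ↔ Xᵀ *ᵥ v = p ∧ Yᵀ *ᵥ v = q := by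
  rw [transpose_fromCols, fromRows_mulVec, Sum.elim_eq_iff]

variable [Fintype n₁] [Fintype n₂]

theorem mulVec_mem_range_fromCols_left (X : Matrix m n₁ R) (Y : Matrix m n₂ R) (x : n₁ → R) :
    X *ᵥ x ∈ LinearMap.range (fromCols X Y).mulVecLin :=
  ⟨Sum.elim x 0, by rw [mulVecLin_apply, fromCols_mulVec_sumElim, mulVec_zero, add_zero]⟩

theorem mulVec_mem_range_fromCols_right (X : Matrix m n₁ R) (Y : Matrix m n₂ R) (x : n₂ → R) :
    Y *ᵥ x ∈ LinearMap.range (fromCols X Y).mulVecLin :=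
  ⟨Sum.elim 0 x, by rw [mulVecLin_apply, fromCols_mulVec_sumElim, mulVec_zero, zero_add]⟩

theorem range_mulVecLin_fromCols_left_le (X : Matrix m n₁ R) (Y : Matrix m n₂ R) :
    LinearMap.range X.mulVecLin ≤ LinearMap.range (fromCols X Y).mulVecLin := by
  rintro _ ⟨x, rfl⟩
  exact mulVec_mem_range_fromCols_left X Y x

theorem fromCols_mix_eq_mul_fromBlocks [DecidableEq n₁] [DecidableEq n₂]
    (X : Matrix m n₁ R) (Y : Matrix m n₂ R) (B : Matrix n₁ n₂ R) (c : R) :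
    fromCols X ((1 - c) • (X * B) + c • Y) =
      fromCols X Y *
        (fromBlocks 1 ((1 - c) • B) 0 (c • 1) : Matrix (n₁ ⊕ n₂) (n₁ ⊕ n₂) R) := by
  rw [fromCols_mul_fromBlocks, Matrix.mul_one, Matrix.mul_zero, add_zero, Matrix.mul_smul,
    Matrix.mul_smul, Matrix.mul_one]

theorem isUnit_fromBlocks_one_zero_smul_one [DecidableEq n₁] [DecidableEq n₂]
    (B : Matrix n₁ n₂ R) {c : R} (hc : IsUnit c) :
    IsUnit (fromBlocks 1 B 0 (c • 1) : Matrix (n₁ ⊕ n₂) (n₁ ⊕ n₂) R) := by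
  simpa [isUnit_iff_isUnit_det] using hc.pow (Fintype.card n₂)

variable [Fintype m] [DecidableEq n₁] [DecidableEq n₂]

theorem isUnit_gram_fromCols {X : Matrix m n₁ R} {Y : Matrix m n₂ R} (hX : IsUnit (Xᵀ * X))
    (hS : IsUnit (Yᵀ * Y - Yᵀ * X * (Xᵀ * X)⁻¹ * (Xᵀ * Y))) :
    IsUnit ((fromCols X Y)ᵀ * fromCols X Y) := by
  have := hX.invertible
  rw [transpose_fromCols, fromRows_mul_fromCols, isUnit_fromBlocks_iff_of_invertible₁₁,
    invOf_eq_nonsing_inv]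
  exact hS

theorem minNormUpdate_fromCols [DecidableEq m] {X : Matrix m n₁ R} {Y : Matrix m n₂ R}
    (hX : IsUnit (Xᵀ * X)) (hS : IsUnit (Yᵀ * Y - Yᵀ * X * (Xᵀ * X)⁻¹ * (Xᵀ * Y)))
    (p : n₁ → R) (q : n₂ → R) (w : m → R) :
    minNormUpdate (fromCols X Y) (Sum.elim p q) w =
      minNormUpdate X p w - ((1 - X * (Xᵀ * X)⁻¹ * Xᵀ) * Y *
        (Yᵀ * Y - Yᵀ * X * (Xᵀ * X)⁻¹ * (Xᵀ * Y))⁻¹) *ᵥ (Yᵀ *ᵥ minNormUpdate X p w - q) := by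
  set E := (1 - X * (Xᵀ * X)⁻¹ * Xᵀ) * Y
  set S := Yᵀ * Y - Yᵀ * X * (Xᵀ * X)⁻¹ * (Xᵀ * Y)
  set wX := minNormUpdate X p w
  have hXE : Xᵀ * E = 0 := by
    rw [← Matrix.mul_assoc, transpose_mul_one_sub_proj hX, Matrix.zero_mul]
  have hYE : Yᵀ * E = S := by
    simp only [E, S, Matrix.sub_mul, Matrix.mul_sub, Matrix.one_mul, Matrix.mul_assoc]
  have hE : ∀ x, E *ᵥ x = Y *ᵥ x - X *ᵥ ((Xᵀ * X)⁻¹ *ᵥ (Xᵀ *ᵥ (Y *ᵥ x))) := fun x => by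
    simp only [E, Matrix.sub_mul, sub_mulVec, Matrix.one_mul, mulVec_mulVec, Matrix.mul_assoc]
  refine minNormUpdate_eq_of_sub_mem_range (isUnit_gram_fromCols hX hS) ?_ ?_
  · rw [sub_right_comm, ← mulVec_mulVec, hE]
    refine Submodule.sub_mem _ ?_ (Submodule.sub_mem _ ?_ ?_)
    · exact range_mulVecLin_fromCols_left_le X Y (minNormUpdate_sub_mem_range X p w)
    · exact mulVec_mem_range_fromCols_right _ _ _
    · exact mulVec_mem_range_fromCols_left _ _ _
  · have hXv : Xᵀ *ᵥ (wX - (E * S⁻¹) *ᵥ (Yᵀ *ᵥ wX - q)) = p := by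
      rw [mulVec_sub, mulVec_mulVec, ← Matrix.mul_assoc, hXE, Matrix.zero_mul, zero_mulVec,
        sub_zero, transpose_mulVec_minNormUpdate hX]
    have hYv : Yᵀ *ᵥ (wX - (E * S⁻¹) *ᵥ (Yᵀ *ᵥ wX - q)) = q := by
      rw [mulVec_sub, mulVec_mulVec, ← Matrix.mul_assoc, hYE,
        mul_nonsing_inv _ ((isUnit_iff_isUnit_det _).mp hS), one_mulVec, sub_sub_cancel]
    rw [transpose_fromCols, fromRows_mulVec, hXv, hYv]

theorem minNormUpdate_fromCols_mix {X : Matrix m n₁ R} {Y : Matrix m n₂ R}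
    (B : Matrix n₁ n₂ R) {c : R} (hc : IsUnit c) (hXY : IsUnit ((fromCols X Y)ᵀ * fromCols X Y))
    {w w₀ : m → R} (hw : w - w₀ ∈ LinearMap.range (fromCols X Y).mulVecLin) (p : n₁ → R) :
    minNormUpdate (fromCols X ((1 - c) • (X * B) + c • Y)) (Sum.elim p (Bᵀ *ᵥ p)) w =
      minNormUpdate (fromCols X Y) (Sum.elim p (Bᵀ *ᵥ p)) w₀ := by
  set v := minNormUpdate (fromCols X Y) (Sum.elim p (Bᵀ *ᵥ p)) w₀
  have hT := isUnit_fromBlocks_one_zero_smul_one ((1 - c) • B) hc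
  obtain ⟨hXv, hYv⟩ := (transpose_fromCols_mulVec_eq_sumElim_iff X Y v p (Bᵀ *ᵥ p)).mp
    (transpose_mulVec_minNormUpdate hXY _ _)
  rw [fromCols_mix_eq_mul_fromBlocks]
  refine minNormUpdate_eq_of_sub_mem_range (isUnit_gram_mul_of_isUnit hXY hT) ?_ ?_
  · rw [range_mulVecLin_mul_of_isUnit _ hT, ← sub_sub_sub_cancel_right v w w₀]
    exact Submodule.sub_mem _ (minNormUpdate_sub_mem_range _ _ _) hw
  · rw [← fromCols_mix_eq_mul_fromBlocks, transpose_fromCols_mulVec_eq_sumElim_iff, hXv,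
      transpose_add, transpose_smul, transpose_smul, transpose_mul, add_mulVec, smul_mulVec,
      smul_mulVec, ← mulVec_mulVec, hXv, hYv]
    exact ⟨rfl, by module⟩

end Blocks

theorem mixed_data_gap_to_retrain_general {D Nr Nu : ℕ}
    (Zr : Matrix (Fin D) (Fin Nr) ℝ) (Zu : Matrix (Fin D) (Fin Nu) ℝ)
    (yr : Fin Nr → ℝ) (winit : Fin D → ℝ)
    (Krr : Matrix (Fin Nr) (Fin Nr) ℝ) (hKrr : Krr = Zrᵀ * Zr)
    (hrr : IsUnit Krr)
    (Kru : Matrix (Fin Nr) (Fin Nu) ℝ) (hKru : Kru = Zrᵀ * Zu)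
    (Kur : Matrix (Fin Nu) (Fin Nr) ℝ) (hKur : Kur = Zuᵀ * Zr)
    (Kuu : Matrix (Fin Nu) (Fin Nu) ℝ) (hKuu : Kuu = Zuᵀ * Zu)
    (hS : IsUnit (Kuu - Kur * Krr⁻¹ * Kru))
    (M : Matrix (Fin Nu) (Fin Nu) ℝ) (hM : M = (Kuu - Kur * Krr⁻¹ * Kru)⁻¹)
    (B : Matrix (Fin Nr) (Fin Nu) ℝ)
    (Zrsub : Matrix (Fin D) (Fin Nu) ℝ) (hZrsub : Zrsub = Zr * B)
    (yrsub : Fin Nu → ℝ) (hyrsub : yrsub = Bᵀ *ᵥ yr)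
    (c : ℝ) (hc0 : 0 < c)
    (Ztu : Matrix (Fin D) (Fin Nu) ℝ) (hZtu : Ztu = (1 - c) • Zrsub + c • Zu)
    (Za : Matrix (Fin D) (Fin Nr ⊕ Fin Nu) ℝ) (hZa : Za = Matrix.fromCols Zr Zu)
    (ya : Fin Nr ⊕ Fin Nu → ℝ)
    (Zta : Matrix (Fin D) (Fin Nr ⊕ Fin Nu) ℝ) (hZta : Zta = Matrix.fromCols Zr Ztu)
    (yta : Fin Nr ⊕ Fin Nu → ℝ) (hyta : yta = Sum.elim yr yrsub)
    (Pr : Matrix (Fin D) (Fin D) ℝ) (hPr : Pr = Zr * Krr⁻¹ * Zrᵀ)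
    (wp : Fin D → ℝ)
    (hwp : wp = winit + Za *ᵥ ((Zaᵀ * Za)⁻¹ *ᵥ (ya - Zaᵀ *ᵥ winit)))
    (wu : Fin D → ℝ)
    (hwu : wu = wp + Zta *ᵥ ((Ztaᵀ * Zta)⁻¹ *ᵥ (yta - Ztaᵀ *ᵥ wp)))
    (wr : Fin D → ℝ)
    (hwr : wr = winit + Zr *ᵥ (Krr⁻¹ *ᵥ (yr - Zrᵀ *ᵥ winit))) :
    wr - wu =
      ((1 - Pr) * Zu * M) *ᵥ
        (Kur *ᵥ (Krr⁻¹ *ᵥ (yr - Zrᵀ *ᵥ winit)) + Zuᵀ *ᵥ winit - yrsub) := by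
  subst hKrr hKru hKur hKuu hM hZrsub hyrsub hZtu hZa hZta hyta hPr
  have hwp_mem : wp - winit ∈ LinearMap.range (fromCols Zr Zu).mulVecLin := by
    rw [hwp, add_sub_cancel_left]
    exact LinearMap.mem_range_self _ _
  have hwu_retrain : wu = minNormUpdate (fromCols Zr Zu) (Sum.elim yr (Bᵀ *ᵥ yr)) winit :=
    hwu.trans (minNormUpdate_fromCols_mix B hc0.ne'.isUnit (isUnit_gram_fromCols hrr hS) hwp_mem yr)
  rw [hwr, hwu_retrain]
  change minNormUpdate Zr yr winit - _ = _
  rw [minNormUpdate_fromCols hrr hS, sub_sub_cancel, minNormUpdate, mulVec_add, mulVec_mulVec,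
    add_comm (Zuᵀ *ᵥ winit)]

/-- Appendix A, final identity: with the pre-trained model `w_p`
(minimum-norm interpolant of all data from `w_init`), the unlearned model `w_u`
obtained by fine-tuning on the mixed data `Z̃_a = [Z_r  Z̃_u]` relabeled with
`ỹ_a = [y_r; y_{r,sub}]`, and the retrained model `w_r`, one has
`w_r − w_u = (I − Π_r) Z_u M (K_ur K_rr⁻¹ (y_r − Z_rᵀ w_init) + Z_uᵀ w_init − y_{r,sub})`,
which depends only on `y_{r,sub}` and not on the mixing scalar `c`. -/
theorem mixed_data_gap_to_retrain {D Nr Nu : ℕ}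
    (Zr : Matrix (Fin D) (Fin Nr) ℝ) (Zu : Matrix (Fin D) (Fin Nu) ℝ)
    (yr : Fin Nr → ℝ) (yu : Fin Nu → ℝ) (winit : Fin D → ℝ)
    (Krr : Matrix (Fin Nr) (Fin Nr) ℝ) (hKrr : Krr = Zrᵀ * Zr)
    (hrr : IsUnit Krr)
    (Kru : Matrix (Fin Nr) (Fin Nu) ℝ) (hKru : Kru = Zrᵀ * Zu)
    (Kur : Matrix (Fin Nu) (Fin Nr) ℝ) (hKur : Kur = Zuᵀ * Zr)
    (Kuu : Matrix (Fin Nu) (Fin Nu) ℝ) (hKuu : Kuu = Zuᵀ * Zu)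
    (hS : IsUnit (Kuu - Kur * Krr⁻¹ * Kru))
    (M : Matrix (Fin Nu) (Fin Nu) ℝ) (hM : M = (Kuu - Kur * Krr⁻¹ * Kru)⁻¹)
    (B : Matrix (Fin Nr) (Fin Nu) ℝ)
    (Zrsub : Matrix (Fin D) (Fin Nu) ℝ) (hZrsub : Zrsub = Zr * B)
    (yrsub : Fin Nu → ℝ) (hyrsub : yrsub = Bᵀ *ᵥ yr)
    (c : ℝ) (hc0 : 0 < c) (hc1 : c < 1)
    (Ztu : Matrix (Fin D) (Fin Nu) ℝ) (hZtu : Ztu = (1 - c) • Zrsub + c • Zu)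
    (Za : Matrix (Fin D) (Fin Nr ⊕ Fin Nu) ℝ) (hZa : Za = Matrix.fromCols Zr Zu)
    (ya : Fin Nr ⊕ Fin Nu → ℝ) (hya : ya = Sum.elim yr yu)
    (Zta : Matrix (Fin D) (Fin Nr ⊕ Fin Nu) ℝ) (hZta : Zta = Matrix.fromCols Zr Ztu)
    (yta : Fin Nr ⊕ Fin Nu → ℝ) (hyta : yta = Sum.elim yr yrsub)
    (Pr : Matrix (Fin D) (Fin D) ℝ) (hPr : Pr = Zr * Krr⁻¹ * Zrᵀ)
    (wp : Fin D → ℝ)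
    (hwp : wp = winit + Za *ᵥ ((Zaᵀ * Za)⁻¹ *ᵥ (ya - Zaᵀ *ᵥ winit)))
    (wu : Fin D → ℝ)
    (hwu : wu = wp + Zta *ᵥ ((Ztaᵀ * Zta)⁻¹ *ᵥ (yta - Ztaᵀ *ᵥ wp)))
    (wr : Fin D → ℝ)
    (hwr : wr = winit + Zr *ᵥ (Krr⁻¹ *ᵥ (yr - Zrᵀ *ᵥ winit))) :
    wr - wu =
      ((1 - Pr) * Zu * M) *ᵥ
        (Kur *ᵥ (Krr⁻¹ *ᵥ (yr - Zrᵀ *ᵥ winit)) + Zuᵀ *ᵥ winit - yrsub) :=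
  mixed_data_gap_to_retrain_general Zr Zu yr winit Krr hKrr hrr Kru hKru Kur hKur Kuu hKuu hS M hM B
    Zrsub hZrsub yrsub hyrsub c hc0 Ztu hZtu Za hZa ya Zta hZta yta hyta Pr hPr wp hwp wu hwu wr hwr
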